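/- Let N = n+1 ≥ 3, let p₀ = 0, p₁, ..., pₙ ∈ ℝ² be the vertices of a regular N-gon in counterclockwise order, let P be the 2×n matrix with columns p₁, ..., pₙ, and let M be the n×n matrix with first row all -1's and subdiagonal entries 1. Then PM = SP, where S is the rotation matrix by angle 2π/N. -/
import Mathlib


open Real

noncomputable section

/-- The `j`-th vertex of a regular `N`-gon with circumradius `r`, phase `φ`, listed in
counterclockwise order and translated so that the `0`-th vertex is the origin. -/
def ngonVert (N : ℕ) (r φ : ℝ) (j : ℕ) : Fin 2 → ℝ :=
  ![r * cos (2 * π * j / N + φ) - r * cos φ, r * sin (2 * π * j / N + φ) - r * sin φ]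

/-- The `2 × n` matrix whose `i`-th column is the vertex `p_{i+1}` of the regular
`(n+1)`-gon. -/
def ngonMatrix (n : ℕ) (r φ : ℝ) : Matrix (Fin 2) (Fin n) ℝ :=
  fun a i => ngonVert (n + 1) r φ ((i : ℕ) + 1) a

/-- The companion-type matrix `M` (over `ℝ`): first row all `-1`'s, subdiagonal entries
`1`. -/
def compM (n : ℕ) : Matrix (Fin n) (Fin n) ℝ :=
  fun k l => if (k : ℕ) = 0 then -1 else if (k : ℕ) = (l : ℕ) + 1 then 1 else 0

/-- With `P` the matrix of nonzero vertices of a regular `N`-gon (`N = n + 1 ≥ 3`, one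
vertex at the origin) and `M` the companion-type matrix, `P M = S P` where `S` is the
rotation by `2π/N`. -/
theorem ngon_intertwine (n : ℕ) (hn : 2 ≤ n) (r φ : ℝ) (hr : 0 < r) :
    ngonMatrix n r φ * compM n =
      !![cos (2 * π / (n + 1)), -sin (2 * π / (n + 1));
         sin (2 * π / (n + 1)), cos (2 * π / (n + 1))] * ngonMatrix n r φ := by
  obtain ⟨m, rfl⟩ : ∃ m, n = m + 2 := ⟨n - 2, by omega⟩
  have hN : ((m : ℝ) + 2 + 1) ≠ 0 := by positivity
  ext a l
  rw [Matrix.mul_apply, Matrix.mul_apply, Fin.sum_univ_two, Fin.sum_univ_succ]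
  simp only [compM, Fin.val_zero, Fin.val_succ, Nat.succ_ne_zero, if_false, if_true,
    Nat.add_right_cancel_iff, reduceIte, mul_ite, mul_one, mul_zero]
  induction l using Fin.lastCases with
  | last =>
    have hz : ∀ x : Fin (m + 1), ¬ ((x : ℕ) = ((Fin.last (m+1)).val : ℕ)) := by
      intro x; simp [Fin.last]; omega
    rw [Finset.sum_eq_zero (fun x _ => by rw [if_neg (hz x)])]
    have h2 : 2 * π * (((m:ℝ) + 1) + 1) / ((m:ℝ) + 2 + 1) + φ
        = (φ - 2 * π / ((m:ℝ)+2+1)) + 2 * π := by field_simp; ring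
    fin_cases a <;>
      simp only [ngonMatrix, ngonVert, Fin.last, Fin.zero_eta, Fin.mk_one, Fin.isValue,
        Matrix.cons_val_zero, Matrix.cons_val_one, Matrix.head_cons, Matrix.of_apply,
        Matrix.cons_val', Matrix.cons_val_fin_one, Matrix.empty_val', Matrix.head_fin_const,
        Fin.val_zero, Nat.cast_zero, zero_add, Nat.cast_one, Nat.cast_add, Nat.cast_ofNat] <;>
      rw [show (2:ℝ) * π * 1 / ((m:ℝ)+2+1) = 2 * π / ((m:ℝ)+2+1) by ring, h2,
        cos_add_two_pi, sin_add_two_pi] <;>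
      simp only [cos_sub, sin_sub, cos_add, sin_add] <;>
      (first
        | linear_combination (-(r * cos φ)) * (sin_sq_add_cos_sq (2 * π / ((m:ℝ)+2+1)))
        | linear_combination (-(r * sin φ)) * (sin_sq_add_cos_sq (2 * π / ((m:ℝ)+2+1))))
  | cast i =>
    have hcond : ∀ x : Fin (m+1), ((x : ℕ) = ((Fin.castSucc i : Fin (m+2)) : ℕ)) ↔ x = i := by
      intro x; simp [Fin.ext_iff]
    simp only [hcond]
    rw [Finset.sum_ite_eq' Finset.univ i]
    simp only [Finset.mem_univ, if_true]
    have h2 : 2 * π * (((i:ℝ) + 1) + 1) / ((m:ℝ) + 2 + 1) + φ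
        = 2 * π / ((m:ℝ)+2+1) + (2 * π * ((i:ℝ) + 1) / ((m:ℝ)+2+1) + φ) := by ring
    fin_cases a <;>
      simp only [ngonMatrix, ngonVert, Fin.coe_castSucc, Fin.val_succ, Fin.zero_eta, Fin.mk_one,
        Fin.isValue, Matrix.cons_val_zero, Matrix.cons_val_one, Matrix.head_cons, Matrix.of_apply,
        Matrix.cons_val', Matrix.cons_val_fin_one, Matrix.empty_val', Matrix.head_fin_const,
        Fin.val_zero, Nat.cast_zero, zero_add, Nat.cast_one, Nat.cast_add, Nat.cast_ofNat] <;>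
      rw [show (2:ℝ) * π * 1 / ((m:ℝ)+2+1) = 2 * π / ((m:ℝ)+2+1) by ring, h2] <;>
      simp only [cos_add, sin_add] <;>
      ring

end
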